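/- arXiv:2409.16055 — 5 statements merged into one kernel-verified Lean document; each statement's English description precedes it below -/
import Mathlib

section
/- Let k ≥ 2 be a natural number and let n be a positive multiple of k. Then the rank of the edge-vertex incidence matrix B_{C_n^k} of the k-uniform cycle C_n^k is at most n − k + 1; equivalently, the null space of B_{C_n^k} has dimension at least k − 1, spanned by the k − 1 linearly independent vectors x_{ω_k^j} for j = 1, ..., k−1, where ω_k = e^{2πi/k}. -/
open Finset

/-- The hyperedge set of the `k`-uniform cycle `C_n^k` on vertex set `ZMod n`. -/
def cycleEdges (n k : ℕ) [NeZero n] : Finset (Finset (ZMod n)) :=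
  Finset.univ.image (fun i : ZMod n => (Finset.range k).image (fun j : ℕ => i + (j : ZMod n)))

/-- The edge-vertex incidence matrix of the `k`-uniform cycle `C_n^k`. -/
def cycleIncidence (n k : ℕ) [NeZero n] :
    Matrix {e // e ∈ cycleEdges n k} (ZMod n) ℂ :=
  fun e v => if v ∈ e.1 then 1 else 0

/-! Each edge is a translate `i + {0, …, k - 1}`, so for an additive character `ψ` of `ℤ_n` the
entry of `B ψ` at that edge is `ψ i * ∑_{j < k} ψ j`. For `ψ = x_z` with `z` a nontrivial `k`-th
root of unity (a character because `k ∣ n`), this is a vanishing geometric sum. The characters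
`x_{ω^j}`, `1 ≤ j < k`, are distinct, hence linearly independent by Dedekind's lemma, and
rank–nullity turns the `k - 1` kernel vectors into the rank bound. -/

open Matrix

lemma sum_image_add_natCast_range {M : Type*} [AddCommMonoid M] {n k : ℕ} (hkn : k ≤ n)
    (i : ZMod n) (f : ZMod n → M) :
    ∑ v ∈ (range k).image (fun j : ℕ => i + (j : ZMod n)), f v = ∑ j ∈ range k, f (i + j) := by
  refine sum_image fun a ha b hb hab => ?_
  have ha : a < n := (mem_range.mp ha).trans_le hkn
  have hb : b < n := (mem_range.mp hb).trans_le hkn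
  rw [← ZMod.val_cast_of_lt ha, ← ZMod.val_cast_of_lt hb, add_left_cancel hab]

section

variable {n : ℕ} [NeZero n]

lemma cycleIncidence_mulVec_apply (k : ℕ) (x : ZMod n → ℂ) (e : {e // e ∈ cycleEdges n k}) :
    (cycleIncidence n k *ᵥ x) e = ∑ v ∈ e.1, x v := by
  simp only [mulVec, dotProduct, cycleIncidence, ite_mul, one_mul, zero_mul, sum_ite_mem,
    univ_inter]

lemma AddChar.coe_mem_ker_cycleIncidence {k : ℕ} (hkn : k ≤ n) (ψ : AddChar (ZMod n) ℂ)
    (hψ : ∑ j ∈ range k, ψ j = 0) :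
    ⇑ψ ∈ LinearMap.ker (cycleIncidence n k).mulVecLin := by
  ext ⟨e, he⟩
  obtain ⟨i, -, rfl⟩ := mem_image.mp he
  simp only [mulVecLin_apply, cycleIncidence_mulVec_apply, sum_image_add_natCast_range hkn,
    AddChar.map_add_eq_mul, ← mul_sum, hψ, mul_zero, Pi.zero_apply]

lemma pow_val_mem_ker_cycleIncidence {k : ℕ} (hkn : k ≤ n) {z : ℂ} (hzn : z ^ n = 1)
    (hzk : z ^ k = 1) (hz : z ≠ 1) :
    (fun i : ZMod n => z ^ i.val) ∈ LinearMap.ker (cycleIncidence n k).mulVecLin := by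
  refine AddChar.coe_mem_ker_cycleIncidence hkn (AddChar.zmodChar n hzn) ?_
  simp only [AddChar.zmodChar_apply', geom_sum_eq hz, hzk, sub_self, zero_div]

lemma linearIndependent_pow_val {R ι : Type*} [CommRing R] [IsDomain R] {z : ι → R}
    (hzn : ∀ j, z j ^ n = 1) (hz : Function.Injective z) :
    LinearIndependent R (fun j (i : ZMod n) => z j ^ i.val) := by
  refine (linearIndependent_monoidHom (Multiplicative (ZMod n)) R).comp
    (fun j => (AddChar.zmodChar n (hzn j)).toMonoidHom) fun a b hab => hz ?_
  have h1 := DFunLike.congr_fun hab (Multiplicative.ofAdd ((1 : ℕ) : ZMod n))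
  rwa [AddChar.toMonoidHom_apply, AddChar.toMonoidHom_apply, toAdd_ofAdd,
    AddChar.zmodChar_apply', AddChar.zmodChar_apply', pow_one, pow_one] at h1

end

/-- Let `k ≥ 2` and let `n` be a positive multiple of `k`.  Then the rank of the
edge-vertex incidence matrix of `C_n^k` is at most `n - k + 1`; equivalently, its null
space has dimension at least `k - 1`, spanned by the `k - 1` linearly independent vectors
`x_{ω_k^j}` (`j = 1, ..., k-1`), where `ω_k = exp(2πi/k)` and `x_ω(i) = ω ^ i`. -/
theorem stmt1 (k n : ℕ) (hk : 2 ≤ k) [NeZero n] (hdvd : k ∣ n) :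
    (cycleIncidence n k).rank ≤ n - k + 1 ∧
    k - 1 ≤ Module.finrank ℂ (LinearMap.ker (cycleIncidence n k).mulVecLin) ∧
    (∀ j : ℕ, 1 ≤ j → j ≤ k - 1 →
      (fun i : ZMod n => (Complex.exp (2 * (Real.pi : ℂ) * Complex.I / (k : ℂ)) ^ j) ^ i.val) ∈
        LinearMap.ker (cycleIncidence n k).mulVecLin) ∧
    LinearIndependent ℂ (fun (j : Fin (k - 1)) (i : ZMod n) =>
      (Complex.exp (2 * (Real.pi : ℂ) * Complex.I / (k : ℂ)) ^ (j.val + 1)) ^ i.val) := by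
  set ω := Complex.exp (2 * (Real.pi : ℂ) * Complex.I / (k : ℂ))
  have hω : IsPrimitiveRoot ω k := Complex.isPrimitiveRoot_exp k (by omega)
  have hkn : k ≤ n := Nat.le_of_dvd (Nat.pos_of_neZero n) hdvd
  have hωn : ∀ j : ℕ, (ω ^ j) ^ n = 1 := fun j => by
    rw [← pow_mul, mul_comm, pow_mul, (hω.pow_eq_one_iff_dvd n).mpr hdvd, one_pow]
  have hker : ∀ j : ℕ, 1 ≤ j → j ≤ k - 1 →
      (fun i : ZMod n => (ω ^ j) ^ i.val) ∈ LinearMap.ker (cycleIncidence n k).mulVecLin :=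
    fun j hj1 hjk => pow_val_mem_ker_cycleIncidence hkn (hωn j)
      (by rw [← pow_mul, mul_comm, pow_mul, hω.pow_eq_one, one_pow])
      (hω.pow_ne_one_of_pos_of_lt (by omega) (by omega))
  have hli : LinearIndependent ℂ
      (fun (j : Fin (k - 1)) (i : ZMod n) => (ω ^ (j.val + 1)) ^ i.val) :=
    linearIndependent_pow_val (fun j => hωn _) fun a b hab =>
      Fin.ext (by have := hω.pow_inj (by omega) (by omega) hab; omega)
  have hfin : k - 1 ≤ Module.finrank ℂ (LinearMap.ker (cycleIncidence n k).mulVecLin) := by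
    have hspan := Submodule.finrank_mono (Submodule.span_le.mpr (Set.range_subset_iff.mpr
      fun j : Fin (k - 1) => hker (j.val + 1) (by omega) (by omega)))
    simpa [finrank_span_eq_card hli] using hspan
  have hrank := LinearMap.finrank_range_add_finrank_ker (cycleIncidence n k).mulVecLin
  rw [Module.finrank_fintype_fun_eq_card, ZMod.card] at hrank
  exact ⟨by rw [Matrix.rank]; omega, hfin, hker, hli⟩
end

section
/- Let k ≥ 2 be a natural number, let n ≥ k be a natural number, and let r = gcd(k, n). Then the rank of the edge-vertex incidence matrix B_{C_n^k} of the k-uniform cycle C_n^k is at most n − r + 1; in particular, for every r-th root of unity ω ≠ 1, the vector x_ω : ℤ_n → ℂ defined by x_ω(j) = ω^j lies in the null space of B_{C_n^k}, and the null space of B_{C_n^k} has dimension at least r − 1. -/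
open Finset

/-!
The vector `x_ω` is the additive character `j ↦ ω ^ j` of `ZMod n`, so on the edge
`{i, …, i + k - 1}` the incidence matrix sums it to `ω ^ i (1 + ω + ⋯ + ω ^ (k - 1))`, which
vanishes when `ω ^ k = 1 ≠ ω`. The `r - 1` nontrivial `r`-th roots of unity give vectors
whose restrictions to the first `r - 1` vertices form an invertible Vandermonde matrix, hence
a linearly independent family in the null space; rank–nullity then bounds the rank.
-/

theorem ZMod.injOn_add_natCast_range {n k : ℕ} (hkn : k ≤ n) (i : ZMod n) :
    Set.InjOn (fun j : ℕ => i + (j : ZMod n)) (range k) := by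
  intro a ha b hb hab
  have hab : (a : ZMod n) = b := add_left_cancel hab
  simpa [ZMod.val_cast_of_lt ((mem_range.mp ha).trans_le hkn),
    ZMod.val_cast_of_lt ((mem_range.mp hb).trans_le hkn)] using congrArg ZMod.val hab

theorem linearIndependent_pow_val_s2 {K : Type*} [Field K] {m n : ℕ} [NeZero n] (hmn : m ≤ n)
    {a : Fin m → K} (ha : Function.Injective a) :
    LinearIndependent K (fun l (i : ZMod n) => a l ^ i.val) := by
  let restrict : (ZMod n → K) →ₗ[K] (Fin m → K) :=
    LinearMap.funLeft K K (fun j : Fin m => ((j : ℕ) : ZMod n))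
  refine LinearIndependent.of_comp restrict ?_
  have hrows : restrict ∘ (fun l (i : ZMod n) => a l ^ i.val) = Matrix.vandermonde a := by
    funext l j
    simp [restrict, Matrix.vandermonde, ZMod.val_cast_of_lt (j.2.trans_le hmn)]
  rw [hrows]
  exact Matrix.linearIndependent_rows_iff_isUnit.mpr <| (Matrix.isUnit_iff_isUnit_det _).mpr <|
    isUnit_iff_ne_zero.mpr <| Matrix.det_vandermonde_ne_zero_iff.mpr ha

theorem Matrix.rank_add_finrank_ker {m n K : Type*} [Fintype n] [Field K] (A : Matrix m n K) :
    A.rank + Module.finrank K (LinearMap.ker A.mulVecLin) = Fintype.card n := by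
  rw [Matrix.rank, LinearMap.finrank_range_add_finrank_ker, Module.finrank_fintype_fun_eq_card]

section CycleIncidence

variable {n k : ℕ} [NeZero n]

theorem exists_eq_image_of_mem_cycleEdges {e : Finset (ZMod n)} (he : e ∈ cycleEdges n k) :
    ∃ i : ZMod n, e = (range k).image (fun j : ℕ => i + (j : ZMod n)) := by
  obtain ⟨i, -, rfl⟩ := mem_image.mp he
  exact ⟨i, rfl⟩

theorem cycleIncidence_mulVec_apply_s2 (hkn : k ≤ n) (x : ZMod n → ℂ) (i : ZMod n)
    (e : {e // e ∈ cycleEdges n k})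
    (he : e.1 = (range k).image (fun j : ℕ => i + (j : ZMod n))) :
    ((cycleIncidence n k).mulVec x) e = ∑ j ∈ range k, x (i + j) := by
  simp only [Matrix.mulVec, dotProduct, cycleIncidence, ite_mul, one_mul, zero_mul,
    sum_ite_mem, univ_inter, he]
  exact sum_image (ZMod.injOn_add_natCast_range hkn i)

theorem powVal_mem_ker_cycleIncidence (hkn : k ≤ n) {ω : ℂ} (hωn : ω ^ n = 1)
    (hωk : ω ^ k = 1) (hω : ω ≠ 1) :
    (fun i : ZMod n => ω ^ i.val) ∈ LinearMap.ker (cycleIncidence n k).mulVecLin := by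
  rw [LinearMap.mem_ker, Matrix.mulVecLin_apply]
  funext e
  obtain ⟨i, he⟩ := exists_eq_image_of_mem_cycleEdges e.2
  have hshift (j : ℕ) : ω ^ (i + (j : ZMod n)).val = ω ^ i.val * ω ^ j := by
    rw [← AddChar.zmodChar_apply hωn, ← AddChar.zmodChar_apply hωn,
      ← AddChar.zmodChar_apply' hωn, AddChar.map_add_eq_mul]
  rw [cycleIncidence_mulVec_apply_s2 hkn _ i e he]
  simp only [hshift, ← mul_sum, geom_sum_eq hω, hωk, sub_self, zero_div, mul_zero,
    Pi.zero_apply]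

theorem powVal_mem_ker_cycleIncidence_of_dvd (hkn : k ≤ n) {r : ℕ} (hrk : r ∣ k)
    (hrn : r ∣ n) {ω : ℂ} (hω : ω ≠ 1) (hωr : ω ^ r = 1) :
    (fun i : ZMod n => ω ^ i.val) ∈ LinearMap.ker (cycleIncidence n k).mulVecLin :=
  have hord : orderOf ω ∣ r := orderOf_dvd_of_pow_eq_one hωr
  powVal_mem_ker_cycleIncidence hkn (orderOf_dvd_iff_pow_eq_one.mp (hord.trans hrn))
    (orderOf_dvd_iff_pow_eq_one.mp (hord.trans hrk)) hω

theorem sub_one_le_finrank_ker_cycleIncidence (hkn : k ≤ n) {r : ℕ} (hrk : r ∣ k)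
    (hrn : r ∣ n) :
    r - 1 ≤ Module.finrank ℂ (LinearMap.ker (cycleIncidence n k).mulVecLin) := by
  have hr : r ≠ 0 := by rintro rfl; exact NeZero.ne n (zero_dvd_iff.mp hrn)
  obtain ⟨ζ, hζ⟩ : ∃ ζ : ℂ, IsPrimitiveRoot ζ r :=
    ⟨_, Complex.isPrimitiveRoot_exp r hr⟩
  let roots : Fin (r - 1) → ℂ := fun l => ζ ^ ((l : ℕ) + 1)
  have hroots : Function.Injective roots := fun a b hab =>
    Fin.ext (by have := hζ.pow_inj (by omega) (by omega) hab; omega)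
  have hli := linearIndependent_pow_val_s2 (n := n)
    ((Nat.sub_le r 1).trans (Nat.le_of_dvd (NeZero.pos n) hrn)) hroots
  have hmem (l : Fin (r - 1)) :
      (fun i : ZMod n => roots l ^ i.val) ∈ LinearMap.ker (cycleIncidence n k).mulVecLin :=
    powVal_mem_ker_cycleIncidence_of_dvd hkn hrk hrn
      (hζ.pow_ne_one_of_pos_of_lt (Nat.succ_ne_zero _) (by omega))
      (by rw [← pow_mul, mul_comm, pow_mul, hζ.pow_eq_one, one_pow])
  calc r - 1 = Module.finrank ℂ (Submodule.span ℂ (Set.range _)) := by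
        rw [finrank_span_eq_card hli, Fintype.card_fin]
    _ ≤ _ := Submodule.finrank_mono (Submodule.span_le.mpr (Set.range_subset_iff.mpr hmem))

end CycleIncidence

theorem stmt2_general (k n : ℕ) (hkn : k ≤ n) [NeZero n]
    (r : ℕ) (hr : r = Nat.gcd k n) :
    (cycleIncidence n k).rank ≤ n - r + 1 ∧
    (∀ ω : ℂ, ω ≠ 1 → ω ^ r = 1 →
      (fun i : ZMod n => ω ^ i.val) ∈ LinearMap.ker (cycleIncidence n k).mulVecLin) ∧
    r - 1 ≤ Module.finrank ℂ (LinearMap.ker (cycleIncidence n k).mulVecLin) := by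
  have hrk : r ∣ k := hr ▸ Nat.gcd_dvd_left k n
  have hrn : r ∣ n := hr ▸ Nat.gcd_dvd_right k n
  have hnullity := sub_one_le_finrank_ker_cycleIncidence hkn hrk hrn
  have hrank_nullity := (cycleIncidence n k).rank_add_finrank_ker
  rw [ZMod.card] at hrank_nullity
  exact ⟨by omega, fun ω hω hωr => powVal_mem_ker_cycleIncidence_of_dvd hkn hrk hrn hω hωr,
    hnullity⟩

/-- Let `k ≥ 2`, `n ≥ k`, and `r = gcd(k, n)`.  Then the rank of the edge-vertex
incidence matrix of `C_n^k` is at most `n - r + 1`; in particular, for every `r`-th root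
of unity `ω ≠ 1`, the vector `x_ω(j) = ω ^ j` lies in its null space, and the null space
has dimension at least `r - 1`. -/
theorem stmt2 (k n : ℕ) (hk : 2 ≤ k) (hkn : k ≤ n) [NeZero n]
    (r : ℕ) (hr : r = Nat.gcd k n) :
    (cycleIncidence n k).rank ≤ n - r + 1 ∧
    (∀ ω : ℂ, ω ≠ 1 → ω ^ r = 1 →
      (fun i : ZMod n => ω ^ i.val) ∈ LinearMap.ker (cycleIncidence n k).mulVecLin) ∧
    r - 1 ≤ Module.finrank ℂ (LinearMap.ker (cycleIncidence n k).mulVecLin) :=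
  stmt2_general k n hkn r hr
end

section
/- Let H be a hypergraph and suppose there exists U ⊆ V(H) such that the sub-hypergraph of H induced by U is isomorphic to the k-uniform cycle C_n^k for some k ≥ 2 and n ≥ k with gcd(k, n) = r. Then the dimension of the null space of the edge-vertex incidence matrix B_H is at least r − 1. -/
open Finset

/-- The edge-vertex incidence matrix of a hypergraph with edge set `E`. -/
def incidence {V : Type*} [DecidableEq V] (E : Finset (Finset V)) :
    Matrix {e // e ∈ E} V ℂ :=
  fun e v => if v ∈ e.1 then 1 else 0

/-- The hyperedge set of the sub-hypergraph of `H` induced by `U`. -/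
def inducedEdges {V : Type*} [DecidableEq V] (E : Finset (Finset V)) (U : Finset V) :
    Finset (Finset V) :=
  (E.filter (fun e => (e ∩ U).Nonempty)).image (fun e => e ∩ U)


/-!
A nontrivial additive character `ψ` of `ZMod n` with `ψ k = 1` sums to zero over every window
`{i, …, i + k - 1}`: the sum is `ψ i` times the geometric sum `∑_{j < k} ψ 1 ^ j`, and
`ψ 1 ^ k = 1 ≠ ψ 1`. Transported to `U` and extended by zero, `ψ` is therefore a null vector of
the incidence matrix, because every hyperedge meets `U` in `∅` or in a window. Distinct
characters are linearly independent, and `a ↦ ζ ^ a.val` for the `r - 1` nontrivial `r`-th roots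
of unity `ζ` gives `r - 1` of them.
-/

namespace AddChar

variable {R : Type*} [CommRing R] [IsDomain R] {n k : ℕ} [NeZero n]

theorem sum_range_add_eq_zero {ψ : AddChar (ZMod n) R} (hψ : ψ ≠ 1) (hk : ψ k = 1)
    (i : ZMod n) : ∑ j ∈ range k, ψ (i + j) = 0 := by
  have hpow : ∀ j : ℕ, ψ j = ψ 1 ^ j := fun j => by
    rw [← map_nsmul_eq_pow, nsmul_one]
  have hgeom : (∑ j ∈ range k, ψ 1 ^ j) * (ψ 1 - 1) = 0 := by
    rw [geom_sum_mul, ← hpow, hk, sub_self]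
  have hsum : ∑ j ∈ range k, ψ 1 ^ j = 0 :=
    (mul_eq_zero.1 hgeom).resolve_right (sub_ne_zero.2 ((zmod_char_ne_one_iff n ψ).1 hψ))
  simp only [map_add_eq_mul, hpow, ← mul_sum, hsum, mul_zero]

theorem sum_eq_zero_of_mem_cycleEdges (hkn : k ≤ n) {ψ : AddChar (ZMod n) R} (hψ : ψ ≠ 1)
    (hk : ψ k = 1) {c : Finset (ZMod n)} (hc : c ∈ cycleEdges n k) : ∑ m ∈ c, ψ m = 0 := by
  obtain ⟨i, -, rfl⟩ := mem_image.1 hc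
  have hinj : Set.InjOn (fun j : ℕ => i + (j : ZMod n)) (range k) := fun a ha b hb hab => by
    have ha' := (mem_range.1 ha).trans_le hkn
    have hb' := (mem_range.1 hb).trans_le hkn
    simpa [Nat.mod_eq_of_lt ha', Nat.mod_eq_of_lt hb'] using
      congrArg ZMod.val (add_left_cancel hab)
  rw [sum_image hinj, sum_range_add_eq_zero hψ hk]

end AddChar

theorem gcd_sub_one_le_card_addChar (k n : ℕ) [NeZero n] :
    Nat.gcd k n - 1 ≤ Nat.card {ψ : AddChar (ZMod n) ℂ // ψ ≠ 1 ∧ ψ k = 1} := by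
  classical
  set r := Nat.gcd k n
  have hr : NeZero r := ⟨Nat.gcd_ne_zero_right (NeZero.ne n)⟩
  have hpow : ∀ ζ : rootsOfUnity r ℂ, ∀ m, r ∣ m → ((ζ : ℂˣ) : ℂ) ^ m = 1 := by
    rintro ζ _ ⟨q, rfl⟩
    rw [pow_mul, ← Units.val_pow_eq_pow_val, (mem_rootsOfUnity r _).1 ζ.2, Units.val_one, one_pow]
  let χ (ζ : rootsOfUnity r ℂ) : AddChar (ZMod n) ℂ :=
    AddChar.zmodChar n (hpow ζ n (Nat.gcd_dvd_right k n))
  have hχ_one (ζ : rootsOfUnity r ℂ) : χ ζ 1 = ((ζ : ℂˣ) : ℂ) := by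
    simpa using AddChar.zmodChar_apply' (hpow ζ n (Nat.gcd_dvd_right k n)) 1
  let φ (ζ : {ζ : rootsOfUnity r ℂ // ζ ≠ 1}) : {ψ : AddChar (ZMod n) ℂ // ψ ≠ 1 ∧ ψ k = 1} :=
    ⟨χ ζ, (AddChar.zmod_char_ne_one_iff n _).2 (by simpa [hχ_one] using ζ.2),
      by simpa [χ, AddChar.zmodChar_apply'] using hpow ζ k (Nat.gcd_dvd_left k n)⟩
  have hφ : Function.Injective φ := fun ζ ζ' h => by
    have h1 := congrArg (fun ψ : {ψ : AddChar (ZMod n) ℂ // ψ ≠ 1 ∧ ψ k = 1} => ψ.1 1) h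
    simp only [φ, hχ_one] at h1
    exact Subtype.ext (Subtype.ext (Units.ext h1))
  have : Fintype (rootsOfUnity r ℂ) := Fintype.ofFinite _
  calc r - 1 = Nat.card {ζ : rootsOfUnity r ℂ // ζ ≠ 1} := by
        rw [Nat.card_eq_fintype_card, Fintype.card_subtype_compl, Fintype.card_subtype_eq,
          ← Nat.card_eq_fintype_card, Complex.card_rootsOfUnity]
    _ ≤ _ := Nat.card_le_card_of_injective φ hφ

theorem LinearIndependent.extend_zero {ι K W V : Type*} [Semiring K] {g : ι → W → K}
    (hg : LinearIndependent K g) {σ : W → V} (hσ : Function.Injective σ) :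
    LinearIndependent K (fun i => Function.extend σ (g i) 0) :=
  .of_comp (LinearMap.funLeft K K σ) (by convert hg; ext; simp [hσ.extend_apply])

section Incidence

variable {V : Type*} [Fintype V] [DecidableEq V]

theorem incidence_mulVec_apply (E : Finset (Finset V)) (x : V → ℂ) (e : {e // e ∈ E}) :
    (incidence E).mulVec x e = ∑ v ∈ e.1, x v := by
  simp [incidence, Matrix.mulVec, dotProduct, ite_mul]

theorem extend_mem_ker_incidence {W : Type*} [DecidableEq W] (E : Finset (Finset V))
    (U : Finset V) (F : Finset (Finset W)) (f : {v // v ∈ U} ≃ W)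
    (hf : ∀ s : Finset {v // v ∈ U}, s.image Subtype.val ∈ inducedEdges E U → s.image f ∈ F)
    (g : W → ℂ) (hg : ∀ c ∈ F, ∑ w ∈ c, g w = 0) :
    Function.extend (Subtype.val ∘ f.symm) g 0 ∈ LinearMap.ker (incidence E).mulVecLin := by
  have hσ : Function.Injective (Subtype.val ∘ f.symm) :=
    Subtype.val_injective.comp f.symm.injective
  have hx (u : {v // v ∈ U}) : Function.extend (Subtype.val ∘ f.symm) g 0 u = g (f u) := by
    simpa using hσ.extend_apply g 0 (f u)
  rw [LinearMap.mem_ker]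
  ext e
  set s := e.1.subtype (· ∈ U)
  have hsum :
      ∑ v ∈ e.1, Function.extend (Subtype.val ∘ f.symm) g 0 v = ∑ w ∈ s.image f, g w := by
    simp only [s, sum_image f.injective.injOn, ← hx, sum_subtype_eq_sum_filter]
    refine (sum_filter_of_ne fun v _ hv => ?_).symm
    by_contra hvU
    exact hv (Function.extend_apply' _ _ _ fun ⟨w, hw⟩ => hvU (hw ▸ (f.symm w).2))
  rw [Matrix.mulVecLin_apply, incidence_mulVec_apply, hsum, Pi.zero_apply]
  rcases s.eq_empty_or_nonempty with hs | hs
  · simp [hs]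
  refine hg _ (hf s ?_)
  have himage : s.image Subtype.val = e.1 ∩ U := by
    ext v
    simp [s]
  rw [himage]
  exact mem_image.2 ⟨e.1, mem_filter.2 ⟨e.2, himage ▸ hs.image _⟩, rfl⟩

end Incidence

theorem stmt4_general {V : Type*} [Fintype V] [DecidableEq V]
    (E : Finset (Finset V))
    (k n : ℕ) (hkn : k ≤ n) [NeZero n]
    (r : ℕ) (hr : r = Nat.gcd k n)
    (U : Finset V) (f : {v // v ∈ U} ≃ ZMod n)
    (hf : ∀ s : Finset {v // v ∈ U},
      s.image Subtype.val ∈ inducedEdges E U ↔ s.image f ∈ cycleEdges n k) :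
    r - 1 ≤ Module.finrank ℂ (LinearMap.ker (incidence E).mulVecLin) := by
  classical
  subst hr
  let S := {ψ : AddChar (ZMod n) ℂ // ψ ≠ 1 ∧ ψ k = 1}
  let y (ψ : S) : LinearMap.ker (incidence E).mulVecLin :=
    ⟨_, extend_mem_ker_incidence E U _ f (fun s => (hf s).1) ψ.1
      fun _ => ψ.1.sum_eq_zero_of_mem_cycleEdges hkn ψ.2.1 ψ.2.2⟩
  have hy : LinearIndependent ℂ y :=
    .of_comp (LinearMap.ker _).subtype <|
      ((AddChar.linearIndependent _ ℂ).comp _ Subtype.val_injective).extend_zero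
        (Subtype.val_injective.comp f.symm.injective)
  calc Nat.gcd k n - 1 ≤ Nat.card S := gcd_sub_one_le_card_addChar k n
    _ = Fintype.card S := Nat.card_eq_fintype_card
    _ ≤ _ := hy.fintype_card_le_finrank

/-- If a hypergraph `H` has a subset `U ⊆ V(H)` whose induced sub-hypergraph is
isomorphic to the `k`-uniform cycle `C_n^k` (`k ≥ 2`, `n ≥ k`, `gcd(k,n) = r`), then the
null space of the edge-vertex incidence matrix `B_H` has dimension at least `r - 1`. -/
theorem stmt4 {V : Type*} [Fintype V] [DecidableEq V]
    (E : Finset (Finset V)) (hE : ∀ e ∈ E, e.Nonempty)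
    (k n : ℕ) (hk : 2 ≤ k) (hkn : k ≤ n) [NeZero n]
    (r : ℕ) (hr : r = Nat.gcd k n)
    (U : Finset V) (f : {v // v ∈ U} ≃ ZMod n)
    (hf : ∀ s : Finset {v // v ∈ U},
      s.image Subtype.val ∈ inducedEdges E U ↔ s.image f ∈ cycleEdges n k) :
    r - 1 ≤ Module.finrank ℂ (LinearMap.ker (incidence E).mulVecLin) :=
  stmt4_general E k n hkn r hr U f hf
end

section
/- Let H be a hypergraph. Then the dimension of the null space of the edge-vertex incidence matrix B_H is at least the dimension of the null space of the edge-vertex incidence matrix B_{H/𝓡_u(H)} of the unit-contraction of H. -/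
/-!
Spread a null vector `x` of the contracted incidence matrix evenly over each unit, giving
the vector `v ↦ x(unit of v) / |unit of v|` on `V`. A hyperedge is a union of units, so
its row of `B_H` sums these values unit by unit and returns the row of the contracted edge
applied to `x`, which is zero. Spreading is injective, whence the dimension inequality.
-/

open Finset

/-- The star of a vertex `v`: the set of hyperedges containing `v`. -/
def edgeStar {V : Type*} [DecidableEq V] (E : Finset (Finset V)) (v : V) :
    Finset (Finset V) :=
  E.filter (fun e => v ∈ e)

/-- The unit of the vertex `v`: the set of vertices with the same star as `v`. -/
def unitOf {V : Type*} [Fintype V] [DecidableEq V] (E : Finset (Finset V)) (v : V) :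
    Finset V :=
  Finset.univ.filter (fun u => edgeStar E u = edgeStar E v)

/-- The set of all units of the hypergraph. -/
def unitsFinset {V : Type*} [Fintype V] [DecidableEq V] (E : Finset (Finset V)) :
    Finset (Finset V) :=
  Finset.univ.image (unitOf E)

/-- The hyperedge set of the unit-contraction `H/𝓡_u(H)`. -/
def contractEdges {V : Type*} [Fintype V] [DecidableEq V] (E : Finset (Finset V)) :
    Finset (Finset (Finset V)) :=
  E.image (fun e => e.image (unitOf E))

/-- The edge-vertex incidence matrix of the unit-contraction `H/𝓡_u(H)`. -/
def contractIncidence {V : Type*} [Fintype V] [DecidableEq V] (E : Finset (Finset V)) :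
    Matrix {e // e ∈ contractEdges E} {W // W ∈ unitsFinset E} ℂ :=
  fun e W => if W.1 ∈ e.1 then 1 else 0

namespace UnitContraction

open scoped Matrix

variable {V : Type*} [Fintype V] [DecidableEq V] (E : Finset (Finset V))

lemma mem_unitOf_self (v : V) : v ∈ unitOf E v := by simp [unitOf]

lemma unitOf_eq_of_mem {u v : V} (h : u ∈ unitOf E v) : unitOf E u = unitOf E v := by
  simp only [unitOf, mem_filter, mem_univ, true_and] at h ⊢
  simp only [h]

lemma mem_of_mem_unitOf {e : Finset V} (he : e ∈ E) {c v : V} (hc : c ∈ e)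
    (hv : v ∈ unitOf E c) : v ∈ e := by
  simp only [unitOf, mem_filter, mem_univ, true_and] at hv
  have hce : e ∈ edgeStar E c := mem_filter.mpr ⟨he, hc⟩
  rw [← hv] at hce
  exact (mem_filter.mp hce).2

lemma filter_unitOf_eq {e : Finset V} (he : e ∈ E) {c : V} (hc : c ∈ e) :
    {v ∈ e | unitOf E v = unitOf E c} = unitOf E c := by
  ext v
  simp only [mem_filter]
  refine ⟨fun ⟨_, hv⟩ => hv ▸ mem_unitOf_self E v, fun hv => ?_⟩
  exact ⟨mem_of_mem_unitOf E he hc hv, unitOf_eq_of_mem E hv⟩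

lemma card_filter_unitOf_eq {e : Finset V} (he : e ∈ E) (W : Finset V) :
    #{v ∈ e | unitOf E v = W} = if W ∈ e.image (unitOf E) then #W else 0 := by
  split_ifs with hW
  · obtain ⟨c, hc, rfl⟩ := mem_image.mp hW
    rw [filter_unitOf_eq E he hc]
  · rw [card_eq_zero, filter_eq_empty_iff]
    exact fun v hv hvW => hW (mem_image.mpr ⟨v, hv, hvW⟩)

def toUnit (v : V) : {W // W ∈ unitsFinset E} :=
  ⟨unitOf E v, mem_image_of_mem _ (mem_univ v)⟩

lemma toUnit_surjective : Function.Surjective (toUnit E) := by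
  rintro ⟨W, hW⟩
  obtain ⟨v, -, rfl⟩ := mem_image.mp hW
  exact ⟨v, rfl⟩

lemma card_unitOf_ne_zero (v : V) : (#(unitOf E v) : ℂ) ≠ 0 :=
  Nat.cast_ne_zero.mpr (card_ne_zero_of_mem (mem_unitOf_self E v))

noncomputable def spread : ({W // W ∈ unitsFinset E} → ℂ) →ₗ[ℂ] (V → ℂ) where
  toFun x v := x (toUnit E v) / #(unitOf E v)
  map_add' x y := by ext v; simp [add_div]
  map_smul' c x := by ext v; simp [mul_div_assoc]

lemma spread_injective : Function.Injective (spread E) := by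
  intro x y hxy
  refine funext ((toUnit_surjective E).forall.mpr fun v => ?_)
  exact (div_left_inj' (card_unitOf_ne_zero E v)).mp (congrFun hxy v)

lemma incidence_mulVec_spread (x : {W // W ∈ unitsFinset E} → ℂ) (e : {e // e ∈ E}) :
    (incidence E *ᵥ spread E x) e =
      (contractIncidence E *ᵥ x) ⟨e.1.image (unitOf E), mem_image_of_mem _ e.2⟩ := by
  have hfiber (W : {W // W ∈ unitsFinset E}) :
      ∑ v ∈ e.1 with toUnit E v = W, x W / #W.1 =
        if W.1 ∈ e.1.image (unitOf E) then x W else 0 := by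
    simp only [toUnit, Subtype.ext_iff, sum_const, card_filter_unitOf_eq E e.2, nsmul_eq_mul]
    split_ifs with hW
    · obtain ⟨c, -, hc⟩ := mem_image.mp hW
      exact mul_div_cancel₀ _ (hc ▸ card_unitOf_ne_zero E c)
    · simp
  simp only [Matrix.mulVec, dotProduct, incidence, contractIncidence, ite_mul, one_mul,
    zero_mul, sum_ite_mem, univ_inter]
  exact (sum_fiberwise' e.1 (toUnit E) (fun W => x W / #W.1)).symm.trans
    (sum_congr rfl fun W _ => hfiber W)

end UnitContraction

open UnitContraction in
theorem stmt10_general {V : Type*} [Fintype V] [DecidableEq V]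
    (E : Finset (Finset V)) :
    Module.finrank ℂ (LinearMap.ker (contractIncidence E).mulVecLin) ≤
      Module.finrank ℂ (LinearMap.ker (incidence E).mulVecLin) := by
  have hmaps : ∀ x ∈ LinearMap.ker (contractIncidence E).mulVecLin,
      spread E x ∈ LinearMap.ker (incidence E).mulVecLin := by
    intro x hx
    rw [LinearMap.mem_ker, Matrix.mulVecLin_apply] at hx ⊢
    funext e
    rw [incidence_mulVec_spread, hx, Pi.zero_apply, Pi.zero_apply]
  exact LinearMap.finrank_le_finrank_of_injective
    (f := (spread E).restrict hmaps) fun x y hxy => Subtype.ext (spread_injective E congr($hxy.1))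

/-- Let `H` be a hypergraph.  The dimension of the null space of `B_H` is at least the
dimension of the null space of `B_{H/𝓡_u(H)}` of the unit-contraction of `H`. -/
theorem stmt10 {V : Type*} [Fintype V] [DecidableEq V]
    (E : Finset (Finset V)) (hE : ∀ e ∈ E, e.Nonempty) :
    Module.finrank ℂ (LinearMap.ker (contractIncidence E).mulVecLin) ≤
      Module.finrank ℂ (LinearMap.ker (incidence E).mulVecLin) :=
  stmt10_general E
end

section
/- Let H be a hypergraph with set of units 𝔘(H). Then the dimension of the null space of the edge-vertex incidence matrix B_H is at least |V(H)| − |𝔘(H)|. -/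
/-! Two vertices of the same unit lie in the same hyperedges, so their columns of `B_H` agree:
`B_H` is obtained from the hyperedge–unit incidence matrix by repeating columns, hence has rank
at most `|𝔘(H)|`, and rank–nullity gives the bound. -/

open Finset

open Matrix

theorem Matrix.rank_add_finrank_ker_mulVecLin {K m n : Type*} [Field K] [Fintype n]
    (A : Matrix m n K) :
    A.rank + Module.finrank K (LinearMap.ker A.mulVecLin) = Fintype.card n := by
  rw [Matrix.rank, LinearMap.finrank_range_add_finrank_ker, Module.finrank_fintype_fun_eq_card]

section Units

variable {V : Type*} [Fintype V] [DecidableEq V] (E : Finset (Finset V))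

theorem mem_unitOf_self (v : V) : v ∈ unitOf E v := by
  simp [unitOf]

theorem unitOf_mem_unitsFinset (v : V) : unitOf E v ∈ unitsFinset E :=
  mem_image_of_mem _ (mem_univ v)

theorem mem_iff_unitOf_subset {e : Finset V} (he : e ∈ E) (v : V) :
    v ∈ e ↔ unitOf E v ⊆ e := by
  refine ⟨fun hv u hu => ?_, fun h => h (mem_unitOf_self E v)⟩
  have hstar : edgeStar E u = edgeStar E v := (mem_filter.mp hu).2
  have : e ∈ edgeStar E u := hstar ▸ mem_filter.mpr ⟨he, hv⟩
  exact (mem_filter.mp this).2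

def unitIncidence : Matrix {e // e ∈ E} {s // s ∈ unitsFinset E} ℂ :=
  fun e s => if s.1 ⊆ e.1 then 1 else 0

theorem incidence_eq_submatrix_unitIncidence :
    incidence E = (unitIncidence E).submatrix id
      (fun v => ⟨unitOf E v, unitOf_mem_unitsFinset E v⟩) := by
  ext e v
  simp only [incidence, unitIncidence, submatrix_apply, id, mem_iff_unitOf_subset E e.2 v]

theorem rank_incidence_le_card_unitsFinset :
    (incidence E).rank ≤ #(unitsFinset E) := by
  rw [incidence_eq_submatrix_unitIncidence]
  calc _ ≤ (unitIncidence E).rank := rank_submatrix_le _ _ _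
    _ ≤ Fintype.card {s // s ∈ unitsFinset E} := rank_le_card_width _
    _ = #(unitsFinset E) := Fintype.card_coe _

end Units

theorem stmt13_general {V : Type*} [Fintype V] [DecidableEq V]
    (E : Finset (Finset V)) :
    Fintype.card V - (unitsFinset E).card ≤
      Module.finrank ℂ (LinearMap.ker (incidence E).mulVecLin) := by
  have hrank := rank_incidence_le_card_unitsFinset E
  have hnullity := (incidence E).rank_add_finrank_ker_mulVecLin
  omega

/-- Let `H` be a hypergraph with set of units `𝔘(H)`.  The dimension of the null space
of the edge-vertex incidence matrix `B_H` is at least `|V(H)| − |𝔘(H)|`. -/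
theorem stmt13 {V : Type*} [Fintype V] [DecidableEq V]
    (E : Finset (Finset V)) (hE : ∀ e ∈ E, e.Nonempty) :
    Fintype.card V - (unitsFinset E).card ≤
      Module.finrank ℂ (LinearMap.ker (incidence E).mulVecLin) :=
  stmt13_general E
end
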